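/- arXiv:1101.4906 — 2 statements merged into one kernel-verified Lean document; each statement's English description precedes it below -/
import Mathlib

section
/- (Bol's identity) Let M be a positive integer, γ = [[a,b],[c,d]] ∈ SL₂(ℤ), and let φ be a holomorphic function on the upper half-plane. Then the M-th derivative satisfies D^M[(cτ+d)^{M-1} φ(γτ)] = (cτ+d)^{-M-1} φ^{(M)}(γτ), where γτ = (aτ+b)/(cτ+d) and D = d/dτ. -/
/-!
Write `j(τ) = cτ + d` and `g(τ) = (aτ + b)/(cτ + d)`, so that `j' = c` and `g' = j⁻²`.
By the chain rule `j² D (ψ ∘ g) = ψ' ∘ g`, so `(j² D)^M (φ ∘ g) = φ^{(M)} ∘ g`, and for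
`M = n + 1` Bol's identity becomes the operator identity `(j² D)^{n+1} = j^{n+2} D^{n+1} j^n`.
This follows by induction on `n` from the Leibniz rule for the affine factor `j`,
`D^{n+1} (j h) = j D^{n+1} h + (n + 1) c D^n h`.
-/

open Set Filter

section IteratedDerivOpen

variable {U : Set ℂ} {f : ℂ → ℂ} {z : ℂ}

theorem hasDerivAt_iteratedDerivWithin_of_isOpen (hU : IsOpen U) (hf : DifferentiableOn ℂ f U)
    (n : ℕ) (hz : z ∈ U) :
    HasDerivAt (iteratedDerivWithin n f U) (iteratedDerivWithin (n + 1) f U z) z := by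
  have hdiff : DifferentiableOn ℂ (iteratedDerivWithin n f U) U :=
    (hf.contDiffOn (n := ⊤) hU).differentiableOn_iteratedDerivWithin
      (WithTop.coe_lt_top _) hU.uniqueDiffOn
  rw [iteratedDerivWithin_succ, derivWithin_of_isOpen hU hz]
  exact (hdiff.differentiableAt (hU.mem_nhds hz)).hasDerivAt

theorem iteratedDerivWithin_affine_mul (hU : IsOpen U) (hf : DifferentiableOn ℂ f U)
    (c d : ℂ) (n : ℕ) (hz : z ∈ U) :
    iteratedDerivWithin (n + 1) (fun w => (c * w + d) * f w) U z
      = (c * z + d) * iteratedDerivWithin (n + 1) f U z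
        + (n + 1) * c * iteratedDerivWithin n f U z := by
  have hj : ∀ z, HasDerivAt (fun w => c * w + d) c z := fun z => by
    simpa using ((hasDerivAt_id z).const_mul c).add_const d
  induction n generalizing z with
  | zero =>
    have h := (hj z).fun_mul (hasDerivAt_iteratedDerivWithin_of_isOpen hU hf 0 hz)
    rw [iteratedDerivWithin_succ, derivWithin_of_isOpen hU hz]
    simp only [iteratedDerivWithin_zero] at h ⊢
    rw [h.deriv]
    push_cast
    ring
  | succ n ih =>
    have hD (k : ℕ) := hasDerivAt_iteratedDerivWithin_of_isOpen hU hf k hz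
    have h := ((hj z).fun_mul (hD (n + 1))).fun_add ((hD n).const_mul ((n + 1) * c))
    rw [iteratedDerivWithin_succ, derivWithin_of_isOpen hU hz,
      (eventuallyEq_of_mem (hU.mem_nhds hz) fun w hw => ih hw).deriv_eq, h.deriv]
    push_cast
    ring

theorem affine_sq_mul_deriv_pow_mul_iteratedDerivWithin (hU : IsOpen U)
    (hf : DifferentiableOn ℂ f U) (c d : ℂ) (n : ℕ) (hz : z ∈ U) :
    (c * z + d) ^ 2 * deriv (fun w => (c * w + d) ^ (n + 2)
        * iteratedDerivWithin (n + 1) (fun w => (c * w + d) ^ n * f w) U w) z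
      = (c * z + d) ^ (n + 3)
        * iteratedDerivWithin (n + 2) (fun w => (c * w + d) ^ (n + 1) * f w) U z := by
  set h := fun w => (c * w + d) ^ n * f w
  have hh : DifferentiableOn ℂ h U := by fun_prop
  have hjpow : HasDerivAt (fun w => (c * w + d) ^ (n + 2))
      ((n + 2 : ℕ) * (c * z + d) ^ (n + 1) * c) z := by
    simpa using (((hasDerivAt_id z).const_mul c).add_const d).fun_pow (n + 2)
  have hmul : (fun w => (c * w + d) ^ (n + 1) * f w) = fun w => (c * w + d) * h w := by
    funext w; ring
  rw [(hjpow.fun_mul (hasDerivAt_iteratedDerivWithin_of_isOpen hU hh (n + 1) hz)).deriv, hmul,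
    iteratedDerivWithin_affine_mul hU hh c d (n + 1) hz]
  push_cast
  ring

end IteratedDerivOpen

theorem bol_identity {U V : Set ℂ} {g ψ : ℂ → ℂ} {c d : ℂ} (hU : IsOpen U) (hV : IsOpen V)
    (hψ : DifferentiableOn ℂ ψ V) (hg : ∀ z ∈ U, HasDerivAt g ((c * z + d) ^ 2)⁻¹ z)
    (hgUV : MapsTo g U V) (hj : ∀ z ∈ U, c * z + d ≠ 0) (n : ℕ) {z : ℂ} (hz : z ∈ U) :
    (c * z + d) ^ (n + 2) * iteratedDerivWithin (n + 1) (fun w => (c * w + d) ^ n * ψ (g w)) U z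
      = iteratedDerivWithin (n + 1) ψ V (g z) := by
  have chain (k : ℕ) {z : ℂ} (hz : z ∈ U) :
      (c * z + d) ^ 2 * deriv (fun w => iteratedDerivWithin k ψ V (g w)) z
        = iteratedDerivWithin (k + 1) ψ V (g z) := by
    have hcomp : HasDerivAt (fun w => iteratedDerivWithin k ψ V (g w))
        (iteratedDerivWithin (k + 1) ψ V (g z) * ((c * z + d) ^ 2)⁻¹) z :=
      (hasDerivAt_iteratedDerivWithin_of_isOpen hV hψ k (hgUV hz)).comp z (hg z hz)
    rw [hcomp.deriv]
    field_simp [hj z hz]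
  induction n generalizing z with
  | zero =>
    rw [iteratedDerivWithin_succ, derivWithin_of_isOpen hU hz, ← chain 0 hz]
    simp only [pow_zero, one_mul, zero_add, iteratedDerivWithin_zero]
  | succ n ih =>
    have hψg : DifferentiableOn ℂ (fun w => ψ (g w)) U :=
      hψ.comp (fun w hw => (hg w hw).differentiableAt.differentiableWithinAt) hgUV
    calc (c * z + d) ^ (n + 1 + 2)
          * iteratedDerivWithin (n + 1 + 1) (fun w => (c * w + d) ^ (n + 1) * ψ (g w)) U z
        = (c * z + d) ^ 2 * deriv (fun w => (c * w + d) ^ (n + 2)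
            * iteratedDerivWithin (n + 1) (fun w => (c * w + d) ^ n * ψ (g w)) U w) z :=
          (affine_sq_mul_deriv_pow_mul_iteratedDerivWithin hU hψg c d n hz).symm
      _ = (c * z + d) ^ 2 * deriv (fun w => iteratedDerivWithin (n + 1) ψ V (g w)) z := by
          rw [(eventuallyEq_of_mem (hU.mem_nhds hz) fun w hw => ih hw).deriv_eq]
      _ = iteratedDerivWithin (n + 1 + 1) ψ V (g z) := chain (n + 1) hz

theorem hasDerivAt_mobius {𝕜 : Type*} [NontriviallyNormedField 𝕜] (a b c d : 𝕜) {z : 𝕜}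
    (hz : c * z + d ≠ 0) :
    HasDerivAt (fun w => (a * w + b) / (c * w + d)) ((a * d - b * c) / (c * z + d) ^ 2) z := by
  have hlin (p q : 𝕜) : HasDerivAt (fun w => p * w + q) p z := by
    simpa using ((hasDerivAt_id z).const_mul p).add_const q
  refine ((hlin a b).fun_div (hlin c d) hz).congr_deriv ?_
  ring

theorem Complex.im_mobius (a b c d : ℝ) (z : ℂ) :
    (((a : ℂ) * z + b) / ((c : ℂ) * z + d)).im
      = (a * d - b * c) * z.im / Complex.normSq ((c : ℂ) * z + d) := by
  rw [Complex.div_im, div_sub_div_same]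
  congr 1
  simp only [Complex.add_im, Complex.add_re, Complex.mul_im, Complex.mul_re, Complex.ofReal_re,
    Complex.ofReal_im]
  ring

theorem Complex.mobius_denom_ne_zero {a b c d : ℝ} (hdet : a * d - b * c ≠ 0) {z : ℂ}
    (hz : z.im ≠ 0) : (c : ℂ) * z + d ≠ 0 := by
  intro h
  have him : c * z.im = 0 := by simpa using congrArg Complex.im h
  have hc : c = 0 := (mul_eq_zero.mp him).resolve_right hz
  have hd : d = 0 := by simpa [hc] using congrArg Complex.re h
  simp [hc, hd] at hdet

theorem mapsTo_mobius_upperHalfPlaneSet {a b c d : ℝ} (hdet : 0 < a * d - b * c) :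
    MapsTo (fun w => ((a : ℂ) * w + b) / ((c : ℂ) * w + d)) {z : ℂ | 0 < z.im}
      {z : ℂ | 0 < z.im} := fun z (hz : 0 < z.im) => by
  change 0 < (((a : ℂ) * z + b) / ((c : ℂ) * z + d)).im
  rw [Complex.im_mobius]
  exact div_pos (mul_pos hdet hz)
    (Complex.normSq_pos.mpr (Complex.mobius_denom_ne_zero hdet.ne' hz.ne'))

/-- Bol's identity: for `γ = [[a,b],[c,d]] ∈ SL₂(ℤ)` and `φ` holomorphic
on the upper half-plane,
`D^M[(cτ+d)^{M-1} φ(γτ)] = (cτ+d)^{-M-1} φ^{(M)}(γτ)`. -/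
theorem stmt9 (M : ℕ) (hM : 1 ≤ M) (a b c d : ℤ) (hdet : a * d - b * c = 1)
    (φ : ℂ → ℂ) (hφ : DifferentiableOn ℂ φ {z : ℂ | 0 < z.im})
    (τ : ℂ) (hτ : 0 < τ.im) :
    iteratedDerivWithin M
        (fun z => ((c : ℂ) * z + d) ^ (M - 1) * φ (((a : ℂ) * z + b) / ((c : ℂ) * z + d)))
        {z : ℂ | 0 < z.im} τ
      = ((c : ℂ) * τ + d) ^ (-(M : ℤ) - 1)
          * iteratedDerivWithin M φ {z : ℂ | 0 < z.im}
              (((a : ℂ) * τ + b) / ((c : ℂ) * τ + d)) := by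
  have hdetR : (a : ℝ) * d - b * c = 1 := by exact_mod_cast hdet
  have hj (z : ℂ) (hz : 0 < z.im) : (c : ℂ) * z + d ≠ 0 := by
    have hdet' : (a : ℝ) * d - b * c ≠ 0 := hdetR ▸ one_ne_zero
    simpa using Complex.mobius_denom_ne_zero hdet' hz.ne'
  have hg (z : ℂ) (hz : 0 < z.im) : HasDerivAt (fun w => ((a : ℂ) * w + b) / ((c : ℂ) * w + d))
      (((c : ℂ) * z + d) ^ 2)⁻¹ z := by
    simpa [← Int.cast_mul, ← Int.cast_sub, hdet] using hasDerivAt_mobius (a : ℂ) b c d (hj z hz)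
  have hmaps := mapsTo_mobius_upperHalfPlaneSet (hdetR ▸ one_pos)
  push_cast at hmaps
  obtain ⟨n, rfl⟩ : ∃ n, M = n + 1 := ⟨M - 1, by omega⟩
  rw [← bol_identity UpperHalfPlane.isOpen_upperHalfPlaneSet
    UpperHalfPlane.isOpen_upperHalfPlaneSet hφ hg hmaps hj n hτ, Nat.add_sub_cancel,
    ← mul_assoc, show -((n + 1 : ℕ) : ℤ) - 1 = -((n + 2 : ℕ) : ℤ) by push_cast; ring,
    zpow_neg, zpow_natCast, inv_mul_cancel₀ (pow_ne_zero _ (hj τ hτ)), one_mul]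
end

section
/- Suppose f : ℍ → ℂ satisfies f(τ) = (cτ+cN+d)^k · S(τ,N) for all integers N and τ in some fixed horizontal strip Im τ > y₀, where c ≠ 0, k > 1-M, and |S(τ,N)| ≥ α·N^{M-1} for some α > 0 and all large N (τ fixed). If f is bounded on the set {γ(τ+N) : N ∈ ℤ, N large} (e.g., because f extends continuously to the rational point a/c approached by γ(τ+N)), then we obtain a contradiction; hence no such bounded f exists. Formally: under these hypotheses, |f(γ(τ+N))| → ∞ as N → ∞, so f cannot be continuous from above at a/c. -/
/-!
Since `‖cτ + cN + d‖ / N → ‖c‖ > 0`, the factor `‖cτ + cN + d‖ ^ k` is comparable to `N ^ k`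
for every sign of `k`, so `‖f (γ (τ + N))‖ ≳ N ^ (k + M - 1) ≥ N`.
-/

open Filter Topology

theorem tendsto_norm_mul_natCast_add_div_natCast {𝕜 : Type*} [RCLike 𝕜] (c z : 𝕜) :
    Tendsto (fun N : ℕ => ‖c * N + z‖ / N) atTop (𝓝 ‖c‖) := by
  have h : Tendsto (fun N : ℕ => c + z / N) atTop (𝓝 c) := by
    simpa using tendsto_const_nhds.add (tendsto_const_div_atTop_nhds_zero_nat z)
  refine h.norm.congr' ?_
  filter_upwards [eventually_ne_atTop 0] with N hN
  rw [← RCLike.norm_natCast (K := 𝕜) N, ← norm_div, add_div, mul_div_cancel_right₀ _ (by simpa)]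

theorem tendsto_zpow_mul_atTop_of_div_natCast {u s : ℕ → ℝ} {β α : ℝ} {k : ℤ} {m : ℕ}
    (hu : Tendsto (fun N : ℕ => u N / N) atTop (𝓝 β)) (hβ : 0 < β) (hα : 0 < α)
    (hs : ∀ᶠ N : ℕ in atTop, α * (N : ℝ) ^ m ≤ s N) (hkm : 1 ≤ k + m) :
    Tendsto (fun N : ℕ => u N ^ k * s N) atTop atTop := by
  have hpow : Tendsto (fun N : ℕ => (u N / N) ^ k) atTop (𝓝 (β ^ k)) :=
    (continuousAt_zpow₀ β k (Or.inl hβ.ne')).tendsto.comp hu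
  have hβk : 0 < β ^ k := zpow_pos hβ k
  refine tendsto_atTop_mono' atTop ?_
    ((tendsto_natCast_atTop_atTop (R := ℝ)).const_mul_atTop (by positivity : 0 < β ^ k / 2 * α))
  filter_upwards [hpow.eventually_const_le (half_lt_self hβk), hs, eventually_ge_atTop 1]
    with N hq hsN hN
  have hN₁ : (1 : ℝ) ≤ N := by exact_mod_cast hN
  have hN₀ : (N : ℝ) ≠ 0 := by positivity
  calc β ^ k / 2 * α * N
      ≤ β ^ k / 2 * α * (N : ℝ) ^ (k + m) := by
        gcongr
        simpa using zpow_le_zpow_right₀ hN₁ hkm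
    _ = β ^ k / 2 * (α * (N : ℝ) ^ m) * (N : ℝ) ^ k := by
        rw [zpow_add₀ hN₀, zpow_natCast]; ring
    _ ≤ (u N / N) ^ k * s N * (N : ℝ) ^ k := by
        gcongr
        exact (by positivity : 0 ≤ β ^ k / 2).trans hq
    _ = u N ^ k * s N := by
        rw [div_zpow, mul_right_comm, div_mul_cancel₀ _ (zpow_ne_zero k hN₀)]

theorem stmt12_general (a b c d : ℤ) (hc : c ≠ 0)
    (k : ℤ) (M : ℕ) (hk : 1 - (M : ℤ) < k)
    (f : ℂ → ℂ) (τ : ℂ)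
    (S : ℤ → ℂ)
    (hrel : ∀ N : ℤ,
      f (((a : ℂ) * (τ + N) + b) / ((c : ℂ) * (τ + N) + d))
        = ((c : ℂ) * τ + (c : ℂ) * N + d) ^ k * S N)
    (α : ℝ) (hα : 0 < α) (N₁ : ℕ)
    (hS : ∀ N : ℕ, N₁ ≤ N → α * (N : ℝ) ^ (M - 1) ≤ ‖S (N : ℤ)‖) :
    Tendsto (fun N : ℕ => ‖f (((a : ℂ) * (τ + N) + b) / ((c : ℂ) * (τ + N) + d))‖)
        atTop atTop ∧
    ¬ ∃ L : ℂ, Tendsto (fun N : ℕ => f (((a : ℂ) * (τ + N) + b) / ((c : ℂ) * (τ + N) + d)))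
        atTop (nhds L) := by
  have hnorm (N : ℕ) : ‖f (((a : ℂ) * (τ + N) + b) / ((c : ℂ) * (τ + N) + d))‖
      = ‖(c : ℂ) * N + (c * τ + d)‖ ^ k * ‖S N‖ := by
    have h := hrel N
    simp only [Int.cast_natCast] at h
    rw [h, norm_mul, norm_zpow, add_left_comm, ← add_assoc]
  have hgrowth := tendsto_zpow_mul_atTop_of_div_natCast (k := k) (m := M - 1)
    (tendsto_norm_mul_natCast_add_div_natCast (c : ℂ) (c * τ + d))
    (norm_pos_iff.2 (Int.cast_ne_zero.2 hc)) hα (eventually_atTop.2 ⟨N₁, hS⟩) (by omega)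
  simp only [← hnorm] at hgrowth
  exact ⟨hgrowth, fun ⟨L, hL⟩ => not_tendsto_nhds_of_tendsto_atTop hgrowth ‖L‖ hL.norm⟩

/-- if `f(γ(τ+N)) = (cτ+cN+d)^k S(τ,N)` with `c ≠ 0`, `k > 1-M` and
`|S(τ,N)| ≥ α N^{M-1}`, then `|f(γ(τ+N))| → ∞` as `N → ∞`, so `f` has no limit along
the sequence `γ(τ+N) → a/c`; `f` cannot be continuous from above at `a/c`. -/
theorem stmt12 (a b c d : ℤ) (hdet : a * d - b * c = 1) (hc : c ≠ 0)
    (k : ℤ) (M : ℕ) (hM : 1 ≤ M) (hk : 1 - (M : ℤ) < k)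
    (f : ℂ → ℂ) (τ : ℂ) (hτ : 0 < τ.im)
    (S : ℤ → ℂ)
    (hrel : ∀ N : ℤ,
      f (((a : ℂ) * (τ + N) + b) / ((c : ℂ) * (τ + N) + d))
        = ((c : ℂ) * τ + (c : ℂ) * N + d) ^ k * S N)
    (α : ℝ) (hα : 0 < α) (N₁ : ℕ)
    (hS : ∀ N : ℕ, N₁ ≤ N → α * (N : ℝ) ^ (M - 1) ≤ ‖S (N : ℤ)‖) :
    Tendsto (fun N : ℕ => ‖f (((a : ℂ) * (τ + N) + b) / ((c : ℂ) * (τ + N) + d))‖)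
        atTop atTop ∧
    ¬ ∃ L : ℂ, Tendsto (fun N : ℕ => f (((a : ℂ) * (τ + N) + b) / ((c : ℂ) * (τ + N) + d)))
        atTop (nhds L) :=
  stmt12_general a b c d hc k M hk f τ S hrel α hα N₁ hS
end
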